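/- arXiv:2210.06846 — 2 statements merged into one kernel-verified Lean document; each statement's English description precedes it below -/
import Mathlib

section
/- (Discretization error over a sequence) Let Q = {q₀ = 0 ≤ q₁ ≤ ⋯ ≤ qₙ = 1} be a finite grid of prices in [0,1] and let δ(Q) = max_i (qᵢ - qᵢ₋₁). Then for any finite sequence of valuation pairs (s₁,b₁),…,(s_T,b_T) ∈ [0,1]² and any price p ∈ [0,1], we have Σ_{t=1}^T GFT_t(p) ≤ 2·max_{q ∈ Q} Σ_{t=1}^T GFT_t(q) + δ(Q)·T. -/
open Finset

/-- Gain from trade when a single price `x` is posted to agents with valuations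
`s` (seller) and `b` (buyer). -/
noncomputable def GFT1 (x s b : ℝ) : ℝ := if s ≤ x ∧ x ≤ b then b - s else 0

/-! A price `p` between two grid points `lo ≤ p ≤ hi` loses at most `hi - lo` per round against
the better of them: if a trade happens at `p` then either `s ≤ lo` (the trade also happens at
`lo`), or `hi ≤ b` (it also happens at `hi`), or `lo < s ≤ b < hi`, and then the whole gain
`b - s` is below `hi - lo`. Summing over rounds and bounding each grid price by the best one
gives the factor `2`; a bracketing pair of consecutive grid points exists by a discrete
intermediate value argument. -/

theorem GFT1_nonneg (x s b : ℝ) : 0 ≤ GFT1 x s b := by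
  unfold GFT1
  split_ifs with h
  · linarith [h.1, h.2]
  · rfl

theorem GFT1_le_add_add_sub {lo x hi : ℝ} (hlo : lo ≤ x) (hhi : x ≤ hi) (s b : ℝ) :
    GFT1 x s b ≤ GFT1 lo s b + GFT1 hi s b + (hi - lo) := by
  have h_lo := GFT1_nonneg lo s b
  have h_hi := GFT1_nonneg hi s b
  by_cases htrade : s ≤ x ∧ x ≤ b
  · obtain ⟨hsx, hxb⟩ := htrade
    rw [GFT1, if_pos ⟨hsx, hxb⟩]
    by_cases hslo : s ≤ lo
    · have h_at_lo : GFT1 lo s b = b - s := if_pos ⟨hslo, hlo.trans hxb⟩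
      linarith
    by_cases hhib : hi ≤ b
    · have h_at_hi : GFT1 hi s b = b - s := if_pos ⟨hsx.trans hhi, hhib⟩
      linarith
    linarith [not_le.mp hslo, not_le.mp hhib]
  · rw [GFT1, if_neg htrade]
    linarith [hlo.trans hhi]

theorem sum_GFT1_le_add_add_sub {ι : Type*} (S : Finset ι) (s b : ι → ℝ) {lo x hi : ℝ}
    (hlo : lo ≤ x) (hhi : x ≤ hi) :
    ∑ t ∈ S, GFT1 x (s t) (b t) ≤
      ∑ t ∈ S, GFT1 lo (s t) (b t) + ∑ t ∈ S, GFT1 hi (s t) (b t) + (hi - lo) * #S := by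
  calc ∑ t ∈ S, GFT1 x (s t) (b t)
      ≤ ∑ t ∈ S, (GFT1 lo (s t) (b t) + GFT1 hi (s t) (b t) + (hi - lo)) :=
        sum_le_sum fun t _ => GFT1_le_add_add_sub hlo hhi (s t) (b t)
    _ = _ := by rw [sum_add_distrib, sum_add_distrib, sum_const, nsmul_eq_mul, mul_comm]

theorem Fin.exists_castSucc_le_and_le_succ {α : Type*} [LinearOrder α] {n : ℕ} (hn : n ≠ 0)
    (f : Fin (n + 1) → α) {x : α} (h0 : f 0 ≤ x) (hlast : x ≤ f (Fin.last n)) :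
    ∃ i : Fin n, f i.castSucc ≤ x ∧ x ≤ f i.succ := by
  have hne : (univ.filter fun i : Fin n => f i.castSucc ≤ x).Nonempty :=
    ⟨⟨0, Nat.pos_of_ne_zero hn⟩, by simpa using h0⟩
  set i := (univ.filter fun i : Fin n => f i.castSucc ≤ x).max' hne
  refine ⟨i, by simpa using max'_mem _ hne, ?_⟩
  by_contra! hlt
  have hsucc : i.succ ≠ Fin.last n := by
    rintro h
    rw [h] at hlt
    exact hlt.not_ge hlast
  have hmem : i.succ.castPred hsucc ∈ univ.filter fun i : Fin n => f i.castSucc ≤ x := by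
    simpa using hlt.le
  have hle : i.succ.castPred hsucc ≤ i := le_max' _ _ hmem
  rw [Fin.le_def, Fin.coe_castPred, Fin.val_succ] at hle
  omega

theorem discretization_error_general (n T : ℕ) (q : Fin (n + 1) → ℝ)
    (hq0 : q 0 = 0) (hqn : q (Fin.last n) = 1)
    (δ : ℝ) (hδ : ∀ i : Fin n, q i.succ - q i.castSucc ≤ δ)
    (s b : ℕ → ℝ)
    (p : ℝ) (hp : p ∈ Set.Icc (0:ℝ) 1) :
    ∑ t ∈ Finset.range T, GFT1 p (s t) (b t) ≤
      2 * (Finset.univ.sup' Finset.univ_nonempty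
            fun i : Fin (n + 1) => ∑ t ∈ Finset.range T, GFT1 (q i) (s t) (b t))
        + δ * T := by
  have hn : n ≠ 0 := by
    rintro rfl
    exact zero_ne_one (hq0.symm.trans hqn)
  obtain ⟨i, hlo, hhi⟩ :=
    Fin.exists_castSucc_le_and_le_succ hn q (hq0 ▸ hp.1) (hqn ▸ hp.2)
  have hbest := fun j : Fin (n + 1) => le_sup' (fun i : Fin (n + 1) =>
    ∑ t ∈ Finset.range T, GFT1 (q i) (s t) (b t)) (mem_univ j)
  have hstep : (q i.succ - q i.castSucc) * T ≤ δ * T :=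
    mul_le_mul_of_nonneg_right (hδ i) T.cast_nonneg
  have hsplit := sum_GFT1_le_add_add_sub (range T) s b hlo hhi
  rw [card_range] at hsplit
  linarith [hbest i.castSucc, hbest i.succ]

/-- Discretization error over a sequence: the total gain from trade of any price
`p ∈ [0,1]` is at most twice that of the best grid price, plus `δ(Q)·T`. -/
theorem discretization_error (n T : ℕ) (q : Fin (n + 1) → ℝ)
    (hq0 : q 0 = 0) (hqn : q (Fin.last n) = 1) (hmono : Monotone q)
    (δ : ℝ) (hδ : ∀ i : Fin n, q i.succ - q i.castSucc ≤ δ)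
    (s b : ℕ → ℝ) (hsb : ∀ t, s t ∈ Set.Icc (0:ℝ) 1 ∧ b t ∈ Set.Icc (0:ℝ) 1)
    (p : ℝ) (hp : p ∈ Set.Icc (0:ℝ) 1) :
    ∑ t ∈ Finset.range T, GFT1 p (s t) (b t) ≤
      2 * (Finset.univ.sup' Finset.univ_nonempty
            fun i : Fin (n + 1) => ∑ t ∈ Finset.range T, GFT1 (q i) (s t) (b t))
        + δ * T :=
  discretization_error_general n T q hq0 hqn δ hδ s b p hp
end

section
/- (Mixture expected GFT upper bound for single-price learner) In the randomized instance where i is uniform in {0,…,1/Δ - 1} and then (s,b) is uniform in S_i, any single price p not a multiple of δ yields expected gain from trade δ(Δ² + δ - Δδ) ≤ δ(Δ² + δ). -/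
/-! Write `n = ⌊p / δ⌋`. Since `p` is off the grid it lies strictly inside the cell
`(nδ, (n+1)δ)`, so it trades on an interval with grid endpoints exactly when that interval
contains the cell, and never on a degenerate one. Hence in `S_i` exactly one interval trades:
the long one, with gain `Δ`, if `i = ⌊n / m⌋`, and otherwise the short cell of block `⌊n / m⌋`,
with gain `δ`. Averaging over `i` gives `(Δ + (K - 1)δ) / (K · Km) = δ(Δ² + δ - Δδ)`. -/

open Finset

/-- Expected GFT of price `p` under the uniform distribution on `S_i`. -/
noncomputable def expGFT (K m : ℕ) (Δ δ : ℝ) (i : ℕ) (p : ℝ) : ℝ :=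
  (GFT1 p ((i : ℝ) * Δ) (((i : ℝ) + 1) * Δ)
      + ∑ j ∈ Finset.range K \ {i}, ∑ k ∈ Finset.range m,
          GFT1 p ((j : ℝ) * Δ + (k : ℝ) * δ) ((j : ℝ) * Δ + ((k : ℝ) + 1) * δ)
      + ∑ k ∈ Finset.Icc 1 (m - 1),
          GFT1 p ((i : ℝ) * Δ + (k : ℝ) * δ) ((i : ℝ) * Δ + (k : ℝ) * δ))
    / ((K : ℝ) * m)

theorem GFT1_self (x s : ℝ) : GFT1 x s s = 0 := by simp [GFT1]

namespace Nat

theorem mul_le_and_lt_succ_mul_iff_eq_div {m n j : ℕ} (hm : 0 < m) :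
    j * m ≤ n ∧ n < (j + 1) * m ↔ j = n / m := by
  rw [eq_comm, Nat.div_eq_iff hm, add_one_mul]
  omega

end Nat

section Grid

variable {δ p : ℝ} {n : ℕ}

theorem exists_natCast_mul_lt_lt_succ_mul (hδ : 0 < δ) (hp : 0 ≤ p)
    (hgrid : ∀ k : ℕ, p ≠ k * δ) : ∃ n : ℕ, n * δ < p ∧ p < (n + 1) * δ := by
  refine ⟨⌊p / δ⌋₊, ?_, ?_⟩
  · refine lt_of_le_of_ne ?_ (hgrid _).symm
    exact (le_div_iff₀ hδ).mp (Nat.floor_le (div_nonneg hp hδ.le))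
  · exact (div_lt_iff₀ hδ).mp (Nat.lt_floor_add_one _)

theorem natCast_mul_le_iff (hδ : 0 < δ) (h₁ : n * δ < p) (h₂ : p < (n + 1) * δ) (a : ℕ) :
    a * δ ≤ p ↔ a ≤ n := by
  constructor
  · intro h
    exact Nat.lt_succ_iff.mp (by exact_mod_cast lt_of_mul_lt_mul_right (h.trans_lt h₂) hδ.le)
  · intro h
    exact (mul_le_mul_of_nonneg_right (by exact_mod_cast h) hδ.le).trans h₁.le

theorem le_natCast_mul_iff (hδ : 0 < δ) (h₁ : n * δ < p) (h₂ : p < (n + 1) * δ) (b : ℕ) :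
    p ≤ b * δ ↔ n < b := by
  constructor
  · intro h
    exact_mod_cast lt_of_mul_lt_mul_right (h₁.trans_le h) hδ.le
  · intro h
    exact h₂.le.trans (mul_le_mul_of_nonneg_right (by exact_mod_cast h) hδ.le)

theorem GFT1_natCast_mul (hδ : 0 < δ) (h₁ : n * δ < p) (h₂ : p < (n + 1) * δ) (a b : ℕ) :
    GFT1 p (a * δ) (b * δ) = if a ≤ n ∧ n < b then ((b : ℝ) - a) * δ else 0 := by
  simp only [GFT1, natCast_mul_le_iff hδ h₁ h₂, le_natCast_mul_iff hδ h₁ h₂, sub_mul]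

theorem GFT1_block (hδ : 0 < δ) (h₁ : n * δ < p) (h₂ : p < (n + 1) * δ) {m : ℕ} (hm : 0 < m)
    (j : ℕ) : GFT1 p (j * (m * δ)) ((j + 1) * (m * δ)) = if j = n / m then m * δ else 0 := by
  have := GFT1_natCast_mul hδ h₁ h₂ (j * m) ((j + 1) * m)
  push_cast at this
  rw [← mul_assoc, ← mul_assoc, this]
  simp only [Nat.mul_le_and_lt_succ_mul_iff_eq_div hm]
  split_ifs <;> ring

theorem sum_GFT1_cells (hδ : 0 < δ) (h₁ : n * δ < p) (h₂ : p < (n + 1) * δ) {m : ℕ} (hm : 0 < m)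
    (j : ℕ) :
    ∑ k ∈ range m, GFT1 p (j * (m * δ) + k * δ) (j * (m * δ) + (k + 1) * δ)
      = if j = n / m then δ else 0 := by
  have hterm : ∀ k ∈ range m, GFT1 p (j * (m * δ) + k * δ) (j * (m * δ) + (k + 1) * δ)
      = if j = n / m ∧ k = n % m then δ else 0 := by
    intro k hk
    have hcell : k + m * j ≤ n ∧ n < k + m * j + 1 ↔ j = n / m ∧ k = n % m := by
      rw [eq_comm (a := j), eq_comm (a := k), Nat.div_mod_unique hm]
      simp only [mem_range] at hk
      omega
    have := GFT1_natCast_mul hδ h₁ h₂ (k + m * j) (k + m * j + 1)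
    push_cast at this
    rw [show (j : ℝ) * (m * δ) + k * δ = (k + m * j) * δ by ring,
      show (j : ℝ) * (m * δ) + (k + 1) * δ = (k + m * j + 1) * δ by ring, this]
    simp only [hcell]
    split_ifs <;> ring
  rw [sum_congr rfl hterm]
  by_cases hj : j = n / m
  · simp [hj, Nat.mod_lt n hm]
  · simp [hj]

end Grid

section Mixture

variable {K m n : ℕ} {δ p : ℝ}

theorem expGFT_eq (hδ : 0 < δ) (h₁ : n * δ < p) (h₂ : p < (n + 1) * δ) (hm : 0 < m)
    (hnK : n / m < K) (i : ℕ) :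
    expGFT K m (m * δ) δ i p = (if i = n / m then m * δ else δ) / (K * m) := by
  have hblocks :
      ∑ j ∈ range K \ {i}, (if j = n / m then δ else 0) = if i = n / m then 0 else δ := by
    rw [sum_ite_eq']
    by_cases hi : i = n / m
    · simp [hi]
    · simp [hi, hnK, Ne.symm hi]
  simp only [expGFT, GFT1_self, sum_const_zero, add_zero, GFT1_block hδ h₁ h₂ hm,
    sum_GFT1_cells hδ h₁ h₂ hm, hblocks]
  split_ifs <;> simp

theorem sum_expGFT (hδ : 0 < δ) (h₁ : n * δ < p) (h₂ : p < (n + 1) * δ) (hm : 0 < m)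
    (hnK : n / m < K) :
    ∑ i ∈ range K, expGFT K m (m * δ) δ i p = (m * δ + (K - 1) * δ) / (K * m) := by
  have hsplit :
      ∀ i, (if i = n / m then m * δ else δ) = δ + if i = n / m then m * δ - δ else 0 := by
    intro i
    split_ifs <;> ring
  simp only [expGFT_eq hδ h₁ h₂ hm hnK, ← sum_div, hsplit, sum_add_distrib, sum_const, card_range,
    sum_ite_eq', mem_range, hnK, if_true, nsmul_eq_mul]
  ring

end Mixture

/-- Mixture expected GFT upper bound: with `i` uniform among `{0,…,K-1}`, any
single price `p ∈ (0,1)` not a multiple of `δ` yields expected gain from trade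
exactly `δ(Δ² + δ - Δδ) ≤ δ(Δ² + δ)`. -/
theorem mixture_expected_gft (K m : ℕ) (hK : 0 < K) (hm : 0 < m)
    (Δ δ : ℝ) (hΔ : Δ = 1 / (K : ℝ)) (hδ : δ = 1 / ((K : ℝ) * m))
    (p : ℝ) (hp0 : 0 < p) (hp1 : p < 1)
    (hgrid : ∀ k : ℕ, p ≠ (k : ℝ) * δ) :
    (1 / (K : ℝ)) * ∑ i ∈ Finset.range K, expGFT K m Δ δ i p
        = δ * (Δ ^ 2 + δ - Δ * δ) ∧
      (1 / (K : ℝ)) * ∑ i ∈ Finset.range K, expGFT K m Δ δ i p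
        ≤ δ * (Δ ^ 2 + δ) := by
  have hδpos : 0 < δ := by rw [hδ]; positivity
  have hΔδ : Δ = m * δ := by rw [hΔ, hδ]; field_simp
  obtain ⟨n, h₁, h₂⟩ := exists_natCast_mul_lt_lt_succ_mul hδpos hp0.le hgrid
  have hnK : n / m < K := by
    refine Nat.div_lt_of_lt_mul ?_
    have hgrid_one : ((m * K : ℕ) : ℝ) * δ = 1 := by push_cast; rw [hδ]; field_simp
    have : (n : ℝ) * δ < (m * K : ℕ) * δ := hgrid_one ▸ h₁.trans hp1
    exact_mod_cast lt_of_mul_lt_mul_right this hδpos.le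
  have hmean : (1 / (K : ℝ)) * ∑ i ∈ range K, expGFT K m Δ δ i p = δ * (Δ ^ 2 + δ - Δ * δ) := by
    rw [hΔδ, sum_expGFT hδpos h₁ h₂ hm hnK, ← hΔδ, hΔ, hδ]
    field_simp
    ring
  refine ⟨hmean, hmean ▸ ?_⟩
  have : 0 ≤ Δ * δ := by rw [hΔδ]; positivity
  exact mul_le_mul_of_nonneg_left (by linarith) hδpos.le
end
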